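/- Fix l ∈ ℕ. For c ∈ ℝ, define (l+1)×(l+1) real matrices A₀(c), A₁(c), indexed by {0,…,l}, with entries (A_b(c))_{i,j} = c^{j−i}/(j−i)! if j ≥ i and j−i ≡ b (mod 2), and 0 otherwise, for b ∈ {0,1}. Let U₁,…,U_k ⊆ {1,…,m−k}, c₁,…,c_m ∈ ℝ and a₀,…,a_l ∈ ℝ; let e₀ ∈ ℝ^{l+1} be the first standard basis vector and v_R = (a₀·0!, …, a_l·l!)ᵀ. Then for every y ∈ 𝔽₂^{m−k}: Σ_{t=0}^{l} a_t · t! · Σ_{K ⊆ {1,…,k}} I_K^t(y) = Σ_{K ⊆ {1,…,k}} e₀ᵀ · A_{(y₁ + χ_K(1)) mod 2}(c₁) ⋯ A_{(y_{m−k} + χ_K(m−k)) mod 2}(c_{m−k}) · A_{b_K(1)}(c_{m−k+1}) ⋯ A_{b_K(k)}(c_m) · v_R, where b_K(j) = 1 if j ∈ K and 0 otherwise, χ_K ∈ 𝔽₂^{m−k} is the mod-2 sum Σ_{j ∈ K} 𝟙_{U_j} of indicator vectors, χ_K(i) its i-th entry, and I_K^t(y) = Σ_{s ∈ ℤ_{≥0}^k,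 |s| ≤ t, s_j odd for j ∈ K and even for j ∉ K} Σ_{μ ∈ ℤ_{≥0}^{m−k}, |μ| = t − |s|, μ ≡ y + χ_K (mod 2)} (Π_{i=1}^{m−k} c_i^{μ_i}/μ_i!) · (Π_{j=1}^{k} c_{m−k+j}^{s_j}/s_j!). -/
import Mathlib


/-- The (l+1)×(l+1) matrix with entries `c^(j-i)/(j-i)!` for `j ≥ i` with
`j - i ≡ b (mod 2)`, and `0` otherwise. -/
noncomputable def Amat (l : ℕ) (b : ZMod 2) (c : ℝ) :
    Matrix (Fin (l + 1)) (Fin (l + 1)) ℝ :=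
  Matrix.of fun i j =>
    if (i : ℕ) ≤ (j : ℕ) ∧ (((j : ℕ) - (i : ℕ) : ℕ) : ZMod 2) = b then
      c ^ ((j : ℕ) - (i : ℕ)) / (((j : ℕ) - (i : ℕ)).factorial : ℝ)
    else 0

lemma sum_piFinset_cons {n N : ℕ} (f : (Fin (n + 1) → ℕ) → ℝ) :
    ∑ μ ∈ Fintype.piFinset (fun _ : Fin (n + 1) => Finset.range N), f μ =
      ∑ x ∈ Finset.range N, ∑ μ ∈ Fintype.piFinset (fun _ : Fin n => Finset.range N),
        f (Fin.cons x μ) := by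
  rw [← Finset.sum_product']
  refine Finset.sum_nbij' (fun μ => (μ 0, Fin.tail μ)) (fun p => Fin.cons p.1 p.2)
    ?_ ?_ ?_ ?_ ?_
  · intro μ hμ
    simp only [Fintype.mem_piFinset] at hμ
    simp [Finset.mem_product, Fintype.mem_piFinset, Fin.tail, hμ]
  · intro p hp
    simp only [Finset.mem_product, Fintype.mem_piFinset] at hp
    simp only [Fintype.mem_piFinset]
    intro i
    refine Fin.cases ?_ ?_ i
    · simpa using hp.1
    · intro j; simpa using hp.2 j
  · intro μ _; exact Fin.cons_self_tail μ
  · intro p _; simp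
  · intro μ _; rw [Fin.cons_self_tail]

lemma prodAmat_apply (l : ℕ) :
    ∀ (n : ℕ) (b : Fin n → ZMod 2) (c : Fin n → ℝ) (p q : Fin (l + 1)),
    (List.ofFn fun i => Amat l (b i) (c i)).prod p q =
      ∑ μ ∈ (Fintype.piFinset fun _ : Fin n => Finset.range (l + 1)).filter
          (fun μ : Fin n → ℕ =>
            (p : ℕ) + ∑ i, μ i = (q : ℕ) ∧ ∀ i, ((μ i : ℕ) : ZMod 2) = b i),
        ∏ i, c i ^ μ i / ((μ i).factorial : ℝ) := by
  intro n
  induction n with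
  | zero =>
    intro b c p q
    rw [Finset.sum_filter]
    simp only [List.ofFn_zero, List.prod_nil, Matrix.one_apply, Finset.univ_eq_empty,
      Finset.sum_empty, add_zero, IsEmpty.forall_iff, and_true, Finset.prod_empty]
    rw [Finset.sum_const]
    rw [Fintype.card_piFinset]
    simp [Fin.val_inj]
  | succ n ih =>
    intro b c p q
    rw [List.ofFn_succ, List.prod_cons, Matrix.mul_apply]
    simp only [ih]
    conv_rhs =>
      rw [Finset.sum_filter, sum_piFinset_cons]
      simp only [Fin.sum_univ_succ, Fin.prod_univ_succ, Fin.forall_fin_succ, Fin.cons_zero,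
        Fin.cons_succ]
    conv_lhs =>
      simp only [Amat, Matrix.of_apply, Finset.sum_filter, Finset.mul_sum,
        ite_zero_mul_ite_zero]
    rw [← Finset.sum_product', ← Finset.sum_product']
    rw [← Finset.sum_filter, ← Finset.sum_filter]
    refine Finset.sum_bij'
      (fun a _ => ((((a.1 : Fin (l+1)) : ℕ) - (p : ℕ), a.2) : ℕ × (Fin n → ℕ)))
      (fun a ha => (((⟨(p : ℕ) + a.1, by
        simp only [Finset.mem_filter, Finset.mem_product, Finset.mem_range] at ha
        have hq := q.isLt
        omega⟩ : Fin (l + 1)), a.2) : Fin (l+1) × (Fin n → ℕ)))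
      ?_ ?_ ?_ ?_ ?_
    · intro a ha
      simp only [Finset.mem_filter, Finset.mem_product, Finset.mem_range,
        Finset.mem_univ, true_and] at ha ⊢
      obtain ⟨hpi, ⟨hle, hpar⟩, hsum, hpa⟩ := ha
      have hlt := a.1.isLt
      exact ⟨⟨by omega, hpi⟩, by omega, hpar, hpa⟩
    · intro a ha
      simp only [Finset.mem_filter, Finset.mem_product, Finset.mem_range,
        Finset.mem_univ, true_and] at ha ⊢
      obtain ⟨⟨hr, hpi⟩, hsum, hpar, hpa⟩ := ha
      refine ⟨hpi, ⟨by omega, ?_⟩, by omega, hpa⟩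
      simpa [Nat.add_sub_cancel_left] using hpar
    · intro a ha
      simp only [Finset.mem_filter, Finset.mem_product, Finset.mem_univ, true_and] at ha
      obtain ⟨hpi, ⟨hle, hpar⟩, hsum, hpa⟩ := ha
      ext
      · simp only [Fin.val_mk]; omega
      · rfl
    · intro a ha
      ext
      · simp [Nat.add_sub_cancel_left]
      · rfl
    · intro a ha
      rfl

lemma zmod2_one_iff (n : ℕ) : ((n : ZMod 2) = 1) ↔ Odd n := by
  rw [Nat.odd_iff, ← ZMod.natCast_mod n 2]
  rcases Nat.mod_two_eq_zero_or_one n with h | h <;> rw [h] <;> simp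

lemma zmod2_zero_iff (n : ℕ) : ((n : ZMod 2) = 0) ↔ Even n := by
  rw [Nat.even_iff, ← ZMod.natCast_mod n 2]
  rcases Nat.mod_two_eq_zero_or_one n with h | h <;> rw [h] <;> simp

lemma filter_parity_eq {k : ℕ} (t : ℕ) (K : Finset (Fin k)) :
    (Fintype.piFinset fun _ : Fin k => Finset.range (t + 1)).filter
      (fun s : Fin k → ℕ => (∑ j, s j) ≤ t ∧ (∀ j ∈ K, Odd (s j)) ∧ ∀ j ∉ K, Even (s j))
    = (Fintype.piFinset fun _ : Fin k => Finset.range (t + 1)).filter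
      (fun s : Fin k → ℕ => (∑ j, s j) ≤ t ∧
        ∀ j, ((s j : ℕ) : ZMod 2) = if j ∈ K then 1 else 0) := by
  apply Finset.filter_congr
  intro s _
  refine and_congr_right fun _ => ?_
  constructor
  · rintro ⟨h1, h2⟩ j
    by_cases hj : j ∈ K
    · rw [if_pos hj, zmod2_one_iff]; exact h1 j hj
    · rw [if_neg hj, zmod2_zero_iff]; exact h2 j hj
  · intro h
    constructor
    · intro j hj; have := h j; rw [if_pos hj, zmod2_one_iff] at this; exact this
    · intro j hj; have := h j; rw [if_neg hj, zmod2_zero_iff] at this; exact this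


lemma collapse_r (l t : ℕ) (ht : t ≤ l) (A B : Prop) [Decidable A] [Decidable B]
    (u v : ℝ) (mm ms : ℕ) :
    ∑ r : Fin (l + 1),
        (if (mm = (r : ℕ) ∧ A) then u else 0) * (if ((r : ℕ) + ms = t ∧ B) then v else 0)
      = if (mm + ms = t ∧ A ∧ B) then u * v else 0 := by
  simp only [ite_zero_mul_ite_zero]
  by_cases h : mm ≤ l
  · rw [Finset.sum_eq_single (⟨mm, Nat.lt_succ_of_le h⟩ : Fin (l + 1))]
    · refine if_congr ?_ rfl rfl
      constructor
      · rintro ⟨⟨h1, h2⟩, h3, h4⟩; exact ⟨by omega, h2, h4⟩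
      · rintro ⟨h1, h2, h3⟩; exact ⟨⟨rfl, h2⟩, by simpa using by omega, h3⟩
    · intro r _ hr
      rw [if_neg]
      rintro ⟨⟨h1, -⟩, -⟩
      exact hr (Fin.ext h1.symm)
    · simp
  · rw [Finset.sum_eq_zero, if_neg]
    · rintro ⟨h1, -⟩; omega
    · intro r _
      rw [if_neg]
      rintro ⟨⟨h1, -⟩, -⟩
      have := r.isLt; omega

lemma core {Mn kn : ℕ} (l t : ℕ) (ht : t ≤ l)
    (X : (Fin Mn → ℕ) → ℝ) (Y : (Fin kn → ℕ) → ℝ)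
    (pm : (Fin Mn → ℕ) → Prop) [DecidablePred pm]
    (ps : (Fin kn → ℕ) → Prop) [DecidablePred ps] :
    ∑ s ∈ (Fintype.piFinset fun _ : Fin kn => Finset.range (t + 1)).filter
        (fun s => (∑ j, s j) ≤ t ∧ ps s),
      ∑ μ ∈ (Fintype.piFinset fun _ : Fin Mn => Finset.range (t + 1)).filter
          (fun μ => (∑ i, μ i) = t - (∑ j, s j) ∧ pm μ),
        X μ * Y s
    = ∑ r : Fin (l + 1),
        (∑ μ ∈ (Fintype.piFinset fun _ : Fin Mn => Finset.range (l + 1)).filter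
            (fun μ => (∑ i, μ i) = (r : ℕ) ∧ pm μ), X μ) *
        (∑ s ∈ (Fintype.piFinset fun _ : Fin kn => Finset.range (l + 1)).filter
            (fun s => (r : ℕ) + (∑ j, s j) = t ∧ ps s), Y s) := by
  have hpiM : (Fintype.piFinset fun _ : Fin Mn => Finset.range (t + 1)) ⊆
      (Fintype.piFinset fun _ : Fin Mn => Finset.range (l + 1)) := by
    intro x hx
    simp only [Fintype.mem_piFinset, Finset.mem_range] at hx ⊢
    intro i; have := hx i; omega
  have hpik : (Fintype.piFinset fun _ : Fin kn => Finset.range (t + 1)) ⊆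
      (Fintype.piFinset fun _ : Fin kn => Finset.range (l + 1)) := by
    intro x hx
    simp only [Fintype.mem_piFinset, Finset.mem_range] at hx ⊢
    intro i; have := hx i; omega
  -- transform LHS into double sum with indicator
  have hL : ∀ s : Fin kn → ℕ,
      (∑ μ ∈ (Fintype.piFinset fun _ : Fin Mn => Finset.range (t + 1)).filter
          (fun μ => (∑ i, μ i) = t - (∑ j, s j) ∧ pm μ), X μ * Y s)
      = ∑ μ ∈ (Fintype.piFinset fun _ : Fin Mn => Finset.range (l + 1)),
          if (∑ i, μ i) = t - (∑ j, s j) ∧ pm μ then X μ * Y s else 0 := by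
    intro s
    rw [Finset.sum_filter]
    refine Finset.sum_subset hpiM ?_
    intro μ hμ hnot
    rw [if_neg]
    rintro ⟨h1, -⟩
    refine hnot ?_
    simp only [Fintype.mem_piFinset, Finset.mem_range] at hμ ⊢
    intro i
    have : μ i ≤ ∑ i, μ i := Finset.single_le_sum (fun j _ => Nat.zero_le (μ j)) (Finset.mem_univ i)
    omega
  have hR : (∑ r : Fin (l + 1),
        (∑ μ ∈ (Fintype.piFinset fun _ : Fin Mn => Finset.range (l + 1)).filter
            (fun μ => (∑ i, μ i) = (r : ℕ) ∧ pm μ), X μ) *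
        (∑ s ∈ (Fintype.piFinset fun _ : Fin kn => Finset.range (l + 1)).filter
            (fun s => (r : ℕ) + (∑ j, s j) = t ∧ ps s), Y s))
      = ∑ μ ∈ (Fintype.piFinset fun _ : Fin Mn => Finset.range (l + 1)),
          ∑ s ∈ (Fintype.piFinset fun _ : Fin kn => Finset.range (l + 1)),
            if ((∑ i, μ i) + (∑ j, s j) = t ∧ pm μ ∧ ps s) then X μ * Y s else 0 := by
    simp only [Finset.sum_filter]
    simp only [Finset.sum_mul_sum]
    rw [Finset.sum_comm]
    refine Finset.sum_congr rfl fun μ _ => ?_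
    rw [Finset.sum_comm]
    refine Finset.sum_congr rfl fun s _ => ?_
    exact collapse_r l t ht (pm μ) (ps s) (X μ) (Y s) (∑ i, μ i) (∑ j, s j)
  rw [hR]
  simp only [hL]
  rw [Finset.sum_filter]
  rw [Finset.sum_subset hpik (by
    intro s hs hnot
    rw [if_neg]
    rintro ⟨h1, -⟩
    refine hnot ?_
    simp only [Fintype.mem_piFinset, Finset.mem_range] at hs ⊢
    intro j
    have : s j ≤ ∑ j, s j := Finset.single_le_sum (fun j _ => Nat.zero_le (s j)) (Finset.mem_univ j)
    omega)]
  refine Eq.trans (Finset.sum_congr rfl fun s _ => ?_) Finset.sum_comm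
  by_cases hc : (∑ j, s j) ≤ t ∧ ps s
  · obtain ⟨hc1, hc2⟩ := hc
    rw [if_pos ⟨hc1, hc2⟩]
    refine Finset.sum_congr rfl fun μ _ => ?_
    refine if_congr ?_ rfl rfl
    constructor
    · rintro ⟨h1, h2⟩; exact ⟨by omega, h2, hc2⟩
    · rintro ⟨h1, h2, h3⟩; exact ⟨by omega, h2⟩
  · rw [if_neg hc, eq_comm]
    refine Finset.sum_eq_zero fun μ _ => ?_
    rw [if_neg]
    rintro ⟨h1, h2, h3⟩
    exact hc ⟨by omega, h3⟩

/-- amplitude identity for the reference state `|R_k^l(H)⟩` in the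
nearly independent case, as a sum over the 2^k diagonal blocks indexed by
subsets K of {1,…,k}. Here `M` plays the role of `m - k`, `c` the coefficients
of the independent terms and `d` the coefficients `c_{m-k+1},…,c_m`. -/
theorem stmt_10 (M k l : ℕ) (U : Fin k → Finset (Fin M))
    (c : Fin M → ℝ) (d : Fin k → ℝ) (a : ℕ → ℝ) (y : Fin M → ZMod 2) :
    ∑ t ∈ Finset.range (l + 1),
        a t * (t.factorial : ℝ) *
          ∑ K : Finset (Fin k),
            ∑ s ∈ (Fintype.piFinset fun _ : Fin k => Finset.range (t + 1)).filter
                (fun s : Fin k → ℕ =>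
                  (∑ j, s j) ≤ t ∧
                  (∀ j ∈ K, Odd (s j)) ∧ ∀ j ∉ K, Even (s j)),
              ∑ μ ∈ (Fintype.piFinset fun _ : Fin M => Finset.range (t + 1)).filter
                  (fun μ : Fin M → ℕ =>
                    (∑ i, μ i) = t - (∑ j, s j) ∧
                    ∀ i, (μ i : ZMod 2) =
                      y i + ∑ j ∈ K, (if i ∈ U j then (1 : ZMod 2) else 0)),
                (∏ i, c i ^ μ i / ((μ i).factorial : ℝ)) *
                  ∏ j, d j ^ s j / ((s j).factorial : ℝ) =
      ∑ K : Finset (Fin k),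
        (((List.ofFn fun i : Fin M =>
              Amat l (y i + ∑ j ∈ K, (if i ∈ U j then (1 : ZMod 2) else 0)) (c i)).prod *
            (List.ofFn fun j : Fin k =>
              Amat l (if j ∈ K then 1 else 0) (d j)).prod).mulVec
          (fun s : Fin (l + 1) => a s * ((s : ℕ).factorial : ℝ))) 0 := by
  simp only [Finset.mul_sum]
  rw [Finset.sum_comm]
  refine Finset.sum_congr rfl fun K _ => ?_
  simp only [filter_parity_eq]
  simp only [Matrix.mulVec, dotProduct, Matrix.mul_apply, prodAmat_apply]
  simp only [Fin.val_zero, zero_add]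
  rw [← Fin.sum_univ_eq_sum_range]
  refine Finset.sum_congr rfl fun t' _ => ?_
  simp only [← Finset.mul_sum]
  rw [core l (↑t' : ℕ) (Nat.lt_succ_iff.mp t'.isLt)
      (fun μ => ∏ i, c i ^ μ i / ((μ i).factorial : ℝ))
      (fun s => ∏ j, d j ^ s j / ((s j).factorial : ℝ))
      (fun μ => ∀ i, ((μ i : ℕ) : ZMod 2) =
        y i + ∑ j ∈ K, (if i ∈ U j then (1 : ZMod 2) else 0))
      (fun s => ∀ j, ((s j : ℕ) : ZMod 2) = if j ∈ K then 1 else 0)]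
  ring
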